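/- arXiv:2202.03456 — 5 statements merged into one kernel-verified Lean document; each statement's English description precedes it below -/
import Mathlib

section
/- Let q : (K;φ) → (L;ψ) be a distal extension of topological dynamical systems and assume that (L;ψ) is minimal. Then q is an open map. -/
/-!
The Ellis semigroup `E`, the closure of `{φⁿ | n ∈ ℤ}` in `K → K`, is a compact semigroup under
composition. Its elements map `q`-fibres into `q`-fibres and, by distality, are injective on each
fibre, so an idempotent `u ∈ E` fixes every `b` with `q (u b) = q b`. To lift an ultrafilter
`𝒰 → q x` along `q`, minimality of `ψ` gives `s l ∈ E` with `q (s l x) = l`, and a limit `p ∈ E`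
of `s` along `𝒰` satisfies `q (p x) = q x`. An idempotent `t ∘ p` of the compact semigroup
`{t ∘ p | t ∈ E, q (t x) = q x}` (Ellis–Numakura) yields `y = t x` in the fibre of `x` with
`p y = x`; then `s l y → x` and `q (s l y) = l`.
-/

/-- The `n`-th power (for `n : ℤ`) of a homeomorphism, as a map. -/
noncomputable def homeoZPow {K : Type*} [TopologicalSpace K] (φ : K ≃ₜ K) (n : ℤ) : K → K :=
  ⇑(φ.toEquiv ^ n : Equiv.Perm K)

open Filter Function Set Topology

theorem homeoZPow_eq_coe_zpow {K : Type*} [TopologicalSpace K] (φ : K ≃ₜ K) (n : ℤ) :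
    homeoZPow φ n = ⇑(φ ^ n) :=
  let toPerm : (K ≃ₜ K) →* Equiv.Perm K := ⟨⟨Homeomorph.toEquiv, rfl⟩, fun _ _ => rfl⟩
  congrArg DFunLike.coe (map_zpow toPerm φ n).symm

theorem Function.Semiconj.homeomorph_zpow {K L : Type*} [TopologicalSpace K] [TopologicalSpace L]
    {q : K → L} {φ : K ≃ₜ K} {ψ : L ≃ₜ L} (h : Semiconj q φ ψ) (n : ℤ) :
    Semiconj q ⇑(φ ^ n) ⇑(ψ ^ n) := by
  induction n using Int.induction_on with
  | zero => exact Semiconj.id_right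
  | succ n ih =>
    rw [zpow_add_one, zpow_add_one]
    exact ih.comp_right h
  | pred n ih =>
    rw [zpow_sub_one, zpow_sub_one]
    exact ih.comp_right (h.inverses_right φ.right_inv ψ.left_inv)

theorem exists_idempotent_comp_of_isCompact {X : Type*} [TopologicalSpace X] [T2Space X]
    (S : Set (X → X)) (hne : S.Nonempty) (hS : IsCompact S)
    (hcomp : ∀ f ∈ S, ∀ g ∈ S, f ∘ g ∈ S) : ∃ u ∈ S, u ∘ u = u :=
  letI : Semigroup (X → X) := { mul := (· ∘ ·), mul_assoc := fun _ _ _ => rfl }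
  exists_idempotent_in_compact_subsemigroup (fun r => Pi.continuous_precomp r) S hne hS hcomp

theorem isOpenMap_of_exists_tendsto_lift {X Y : Type*} [TopologicalSpace X] [TopologicalSpace Y]
    {f : X → Y} (h : ∀ x, ∀ 𝒰 : Ultrafilter Y, ↑𝒰 ≤ 𝓝 (f x) →
      ∃ g : Y → X, Tendsto g 𝒰 (𝓝 x) ∧ ∀ᶠ y in 𝒰, f (g y) = y) :
    IsOpenMap f := by
  refine isOpenMap_iff_nhds_le.2 fun x U hU => mem_iff_ultrafilter.2 fun 𝒰 h𝒰 => ?_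
  obtain ⟨g, hg, hfg⟩ := h x 𝒰 h𝒰
  filter_upwards [hg hU, hfg] with y hy hfy
  exact hfy ▸ hy

def ellisSemigroup {K : Type*} [TopologicalSpace K] (φ : K ≃ₜ K) : Set (K → K) :=
  closure (range fun n : ℤ => ⇑(φ ^ n))

namespace ellisSemigroup

variable {K : Type*} [TopologicalSpace K] {φ : K ≃ₜ K} {s t : K → K}

theorem zpow_mem (n : ℤ) : ⇑(φ ^ n) ∈ ellisSemigroup φ :=
  subset_closure (mem_range_self n)

theorem id_mem : id ∈ ellisSemigroup φ := zpow_mem 0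

theorem isCompact [CompactSpace K] : IsCompact (ellisSemigroup φ) :=
  isClosed_closure.isCompact

theorem map_mem_of_zpow {Y : Type*} [TopologicalSpace Y] {f : (K → K) → Y} {C : Set Y}
    (hf : Continuous f) (hC : IsClosed C) (h : ∀ n : ℤ, f ⇑(φ ^ n) ∈ C)
    (ht : t ∈ ellisSemigroup φ) : f t ∈ C :=
  closure_minimal (range_subset_iff.2 h : _ ⊆ f ⁻¹' C) (hC.preimage hf) ht

theorem zpow_comp_mem (n : ℤ) (ht : t ∈ ellisSemigroup φ) : ⇑(φ ^ n) ∘ t ∈ ellisSemigroup φ :=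
  map_mem_of_zpow (Pi.continuous_postcomp (φ ^ n).continuous) isClosed_closure
    (fun m => show ⇑(φ ^ n * φ ^ m) ∈ _ from zpow_add φ n m ▸ zpow_mem (n + m)) ht

theorem comp_mem (hs : s ∈ ellisSemigroup φ) (ht : t ∈ ellisSemigroup φ) :
    s ∘ t ∈ ellisSemigroup φ :=
  map_mem_of_zpow (f := (· ∘ t)) (Pi.continuous_precomp t) isClosed_closure
    (fun n => zpow_comp_mem n ht) hs

theorem image_comp_left : (⇑φ ∘ ·) '' ellisSemigroup φ = ellisSemigroup φ := by
  refine Subset.antisymm ?_ fun t ht => ⟨⇑(φ ^ (-1 : ℤ)) ∘ t, zpow_comp_mem (-1) ht, ?_⟩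
  · rintro _ ⟨t, ht, rfl⟩
    simpa using zpow_comp_mem 1 ht
  · funext x
    simp

variable {L : Type*} [TopologicalSpace L] {ψ : L ≃ₜ L} {q : K → L} {a b : K}

theorem apply_eq_of_apply_eq [T2Space L] (hq_cont : Continuous q)
    (hq : Semiconj q φ ψ) (ht : t ∈ ellisSemigroup φ) (hab : q a = q b) : q (t a) = q (t b) :=
  map_mem_of_zpow (f := fun s => (q (s a), q (s b))) (C := diagonal L)
    (by fun_prop) isClosed_diagonal (fun n => by simp [(hq.homeomorph_zpow n).eq, hab]) ht

theorem exists_apply_eq [CompactSpace K] [T2Space L] (hq_cont : Continuous q)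
    (hq : Semiconj q φ ψ)
    (hmin : ∀ M : Set L, IsClosed M → ψ '' M = M → M = ∅ ∨ M = Set.univ) (x : K) (l : L) :
    ∃ t ∈ ellisSemigroup φ, q (t x) = l := by
  set M := (fun t : K → K => q (t x)) '' ellisSemigroup φ
  have hM_closed : IsClosed M :=
    (isCompact.image (hq_cont.comp (continuous_apply x))).isClosed
  have hM_inv : ψ '' M = M :=
    calc ψ '' M = (fun t : K → K => q (t x)) '' ((⇑φ ∘ ·) '' ellisSemigroup φ) := by
          simp only [M, image_image, comp_apply, hq.eq]
      _ = M := by rw [image_comp_left]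
  have hM_univ : M = univ :=
    (hmin M hM_closed hM_inv).resolve_left (nonempty_iff_ne_empty.1 ⟨q x, id, id_mem, rfl⟩)
  exact (hM_univ ▸ mem_univ l : l ∈ M)

end ellisSemigroup

def IsDistalExtension {K L : Type*} [TopologicalSpace K] (φ : K ≃ₜ K) (q : K → L) : Prop :=
  ∀ x y : K, q x = q y →
    (∃ z : K, (z, z) ∈ closure {w : K × K | ∃ n : ℤ, w = (homeoZPow φ n x, homeoZPow φ n y)}) →
      x = y

namespace IsDistalExtension

variable {K L : Type*} [TopologicalSpace K] {φ : K ≃ₜ K} {q : K → L} {p t : K → K} {a b x : K}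

theorem eq_of_apply_eq (hd : IsDistalExtension φ q)
    (ht : t ∈ ellisSemigroup φ) (hab : q a = q b) (h : t a = t b) : a = b := by
  have hpair := ellisSemigroup.map_mem_of_zpow (f := fun s => (s a, s b))
    (C := closure {w : K × K | ∃ n : ℤ, w = (homeoZPow φ n a, homeoZPow φ n b)})
    (by fun_prop) isClosed_closure
    (fun n => subset_closure ⟨n, by simp only [homeoZPow_eq_coe_zpow]⟩) ht
  exact hd a b hab ⟨t a, by rwa [← h] at hpair⟩

theorem apply_eq_self (hd : IsDistalExtension φ q)
    (ht : t ∈ ellisSemigroup φ) (hqt : q (t a) = q a) (htt : t (t a) = t a) : t a = a :=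
  (hd.eq_of_apply_eq ht hqt.symm htt.symm).symm

theorem exists_apply_eq_of_apply_mem_fiber [CompactSpace K] [T2Space K] [TopologicalSpace L]
    [T2Space L] {ψ : L ≃ₜ L} (hq_cont : Continuous q) (hq : Semiconj q φ ψ)
    (hd : IsDistalExtension φ q)
    (hp : p ∈ ellisSemigroup φ) (hpx : q (p x) = q x) : ∃ y, q y = q x ∧ p y = x := by
  set S := {t ∈ ellisSemigroup φ | q (t x) = q x}
  have hS_comp : ∀ s ∈ S, ∀ t ∈ S, s ∘ t ∈ S := fun s hs t ht =>
    ⟨ellisSemigroup.comp_mem hs.1 ht.1,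
      (ellisSemigroup.apply_eq_of_apply_eq hq_cont hq hs.1 ht.2).trans hs.2⟩
  have hS_closed : IsClosed S :=
    isClosed_closure.inter (isClosed_eq (hq_cont.comp (continuous_apply x)) continuous_const)
  obtain ⟨_, ⟨s, hs, rfl⟩, hu⟩ := exists_idempotent_comp_of_isCompact ((· ∘ p) '' S)
    ⟨p ∘ p, p, ⟨hp, hpx⟩, rfl⟩ (hS_closed.isCompact.image (Pi.continuous_precomp p))
    (by
      rintro _ ⟨f, hf, rfl⟩ _ ⟨g, hg, rfl⟩
      exact ⟨f ∘ p ∘ g, hS_comp f hf _ (hS_comp p ⟨hp, hpx⟩ g hg), rfl⟩)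
  have hpsx : q (p (s x)) = q x :=
    (ellisSemigroup.apply_eq_of_apply_eq hq_cont hq hp hs.2).trans hpx
  -- `s ∘ p` is idempotent, so by distality it fixes `s x`, which lies in the fibre of `x`.
  have hspsx : s (p (s x)) = s x := hd.apply_eq_self (ellisSemigroup.comp_mem hs.1 hp)
    (ellisSemigroup.apply_eq_of_apply_eq hq_cont hq hs.1 hpsx) (congrFun hu (s x))
  refine ⟨s x, hs.2, hd.apply_eq_self (t := p ∘ s) (ellisSemigroup.comp_mem hp hs.1) hpsx ?_⟩
  simp only [comp_apply, hspsx]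

end IsDistalExtension

theorem distal_extension_isOpenMap_general
    {K L : Type*} [TopologicalSpace K] [CompactSpace K] [T2Space K]
    [TopologicalSpace L] [T2Space L]
    (φ : K ≃ₜ K) (ψ : L ≃ₜ L) (q : K → L)
    (hq_cont : Continuous q)
    (hq_comm : ∀ x, q (φ x) = ψ (q x))
    (hdistal : ∀ x y : K, q x = q y →
      (∃ z : K, (z, z) ∈
        closure {w : K × K | ∃ n : ℤ, w = (homeoZPow φ n x, homeoZPow φ n y)}) → x = y)
    (hmin : ∀ M : Set L, IsClosed M → ψ '' M = M → M = ∅ ∨ M = Set.univ) :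
    IsOpenMap q := by
  refine isOpenMap_of_exists_tendsto_lift fun x 𝒰 h𝒰 => ?_
  choose s hsE hsl using ellisSemigroup.exists_apply_eq hq_cont hq_comm hmin x
  obtain ⟨p, hpE, hp⟩ := ellisSemigroup.isCompact.ultrafilter_le_nhds (𝒰.map s)
    (le_principal_iff.2 (mem_map.2 (univ_mem' hsE)))
  have hlim : ∀ z, Tendsto (fun l => s l z) 𝒰 (𝓝 (p z)) := fun z =>
    ((continuous_apply z).tendsto p).comp hp
  have hpx : q (p x) = q x := by
    have hqlim := (hq_cont.tendsto (p x)).comp (hlim x)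
    simp only [comp_def, hsl] at hqlim
    exact tendsto_nhds_unique hqlim (tendsto_id'.2 h𝒰)
  obtain ⟨y, hyx, hpy⟩ :=
    IsDistalExtension.exists_apply_eq_of_apply_mem_fiber hq_cont hq_comm hdistal hpE hpx
  refine ⟨fun l => s l y, hpy ▸ hlim y, .of_forall fun l => ?_⟩
  rw [ellisSemigroup.apply_eq_of_apply_eq hq_cont hq_comm (hsE l) hyx, hsl]

/-- A distal extension `q : (K;φ) → (L;ψ)` of topological dynamical systems
with `(L;ψ)` minimal is an open map. -/
theorem distal_extension_isOpenMap
    {K L : Type*} [TopologicalSpace K] [CompactSpace K] [T2Space K] [Nonempty K]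
    [TopologicalSpace L] [CompactSpace L] [T2Space L] [Nonempty L]
    (φ : K ≃ₜ K) (ψ : L ≃ₜ L) (q : K → L)
    (hq_cont : Continuous q) (hq_surj : Function.Surjective q)
    (hq_comm : ∀ x, q (φ x) = ψ (q x))
    (hdistal : ∀ x y : K, q x = q y →
      (∃ z : K, (z, z) ∈
        closure {w : K × K | ∃ n : ℤ, w = (homeoZPow φ n x, homeoZPow φ n y)}) → x = y)
    (hmin : ∀ M : Set L, IsClosed M → ψ '' M = M → M = ∅ ∨ M = Set.univ) :
    IsOpenMap q :=
  distal_extension_isOpenMap_general φ ψ q hq_cont hq_comm hdistal hmin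
end

section
/- Let q : (K;φ) → (L;ψ) be a distal extension of topological dynamical systems, and let τ : K → K belong to the closure of the set {φ^n : n ∈ ℤ} inside the space of all functions K → K equipped with the product (pointwise-convergence) topology. Then τ is injective on every fiber of q: for all x, y ∈ K with q(x) = q(y) and τ(x) = τ(y) one has x = y. In particular, if l ∈ L is such that τ maps the fiber K_l = q⁻¹({l}) into itself and τ(τ(x)) = τ(x) for all x ∈ K_l, then τ(x) = x for all x ∈ K_l. -/
/-- If `q : (K;φ) → (L;ψ)` is a distal extension and `τ : K → K` belongs to
the pointwise closure of `{φ^n : n ∈ ℤ}`, then `τ` is injective on every fiber of `q`;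
in particular, if `τ` maps a fiber `K_l` into itself and is idempotent on it, then it is
the identity on `K_l`. -/
theorem ellis_element_injective_on_fibers
    {K L : Type*} [TopologicalSpace K] [CompactSpace K] [T2Space K] [Nonempty K]
    [TopologicalSpace L] [CompactSpace L] [T2Space L] [Nonempty L]
    (φ : K ≃ₜ K) (ψ : L ≃ₜ L) (q : K → L)
    (hq_cont : Continuous q) (hq_surj : Function.Surjective q)
    (hq_comm : ∀ x, q (φ x) = ψ (q x))
    (hdistal : ∀ x y : K, q x = q y →
      (∃ z : K, (z, z) ∈
        closure {w : K × K | ∃ n : ℤ, w = (homeoZPow φ n x, homeoZPow φ n y)}) → x = y)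
    (τ : K → K)
    (hτ : τ ∈ closure {f : K → K | ∃ n : ℤ, f = homeoZPow φ n}) :
    (∀ x y : K, q x = q y → τ x = τ y → x = y) ∧
      (∀ l : L, (∀ x ∈ q ⁻¹' {l}, τ x ∈ q ⁻¹' {l}) →
        (∀ x ∈ q ⁻¹' {l}, τ (τ x) = τ x) → ∀ x ∈ q ⁻¹' {l}, τ x = x) := by
  have main : ∀ x y : K, q x = q y → τ x = τ y → x = y := by
    intro x y hxy hτxy
    apply hdistal x y hxy
    refine ⟨τ x, ?_⟩
    have hcont : Continuous (fun f : K → K => (f x, f y)) :=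
      (continuous_apply x).prodMk (continuous_apply y)
    have := map_mem_closure hcont hτ
      (t := {w : K × K | ∃ n : ℤ, w = (homeoZPow φ n x, homeoZPow φ n y)})
      (by rintro f ⟨n, rfl⟩; exact ⟨n, rfl⟩)
    simpa [hτxy] using this
  refine ⟨main, ?_⟩
  intro l hmap hidem x hx
  have hτx := hmap x hx
  exact main (τ x) x (by simp_all) (hidem x hx)
end

section
/- Let (X, 𝒜, μ) be a probability space, T : X → X a bimeasurable bijection with T and T⁻¹ preserving μ, (L;ψ) a topological dynamical system, ν a ψ-invariant Borel probability measure on L, and p : X → L a measurable map with p_*μ = ν and p ∘ T = ψ ∘ p μ-almost everywhere. Let e_1, …, e_n be p-orthonormal essentially bounded measurable functions X → ℂ and suppose there are bounded Borel measurable f_{ij} : L → ℂ such that e_i ∘ T = Σ_j (f_{ij} ∘ p) · e_j μ-almost everywhere for each i. Then for ν-almost every l ∈ L the matrix (f_{ij}(l))_{ij} is unitary; in particular, for ν-almost every l and all i, j one has Σ_{k=1}^n f_{ik}(l) · conj(f_{jk}(l)) = 1 if i = j and = 0 if i ≠ j. -/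
open MeasureTheory

/-- The sub-σ-algebra of the domain generated by a map `p : X → L`. -/
def fiberSigmaAlgebra {X L : Type*} [MeasurableSpace L] (p : X → L) : MeasurableSpace X :=
  MeasurableSpace.comap p inferInstance

/-- A family `e_1, …, e_n` of functions `X → ℂ` is `p`-orthonormal if the conditional
expectation of `e_i * conj (e_j)` with respect to the σ-algebra generated by `p` is
(almost everywhere) `1` when `i = j` and `0` otherwise. -/
def POrthonormal {X L : Type*} [MeasurableSpace X] [MeasurableSpace L] (μ : Measure X)
    (p : X → L) {n : ℕ} (e : Fin n → X → ℂ) : Prop :=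
  ∀ i j : Fin n,
    μ[(fun x => e i x * (starRingEnd ℂ) (e j x)) | fiberSigmaAlgebra p]
      =ᵐ[μ] fun _ => if i = j then (1 : ℂ) else 0

/-! Write `Φᵢⱼ = ∑ₖ fᵢₖ · conj fⱼₖ` and let `φ` be a bounded measurable function on `L`.
Expanding `(eᵢ ∘ T) · conj (eⱼ ∘ T)` through the cocycle relation and integrating against `φ ∘ p`,
the cross terms vanish because bounded functions of `p` can be pulled out of the conditional
expectation, and what is left is `∫ φ Φᵢⱼ dν`. On the other hand `φ ∘ p = φ ∘ ψ⁻¹ ∘ p ∘ T`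
almost everywhere, so invariance of `μ` under `T` and of `ν` under `ψ`, together with the
orthonormality of the `eᵢ` themselves, make the same integral `δᵢⱼ ∫ φ dν`. Since `φ` is
arbitrary, `Φᵢⱼ = δᵢⱼ` holds `ν`-almost everywhere. -/

open scoped ComplexConjugate ENNReal

namespace MeasureTheory

theorem MeasurePreserving.integral_comp_of_stronglyMeasurable {α β G : Type*}
    [MeasurableSpace α] [MeasurableSpace β] [NormedAddCommGroup G] [NormedSpace ℝ G]
    {μ : Measure α} {ν : Measure β} {f : α → β} (hf : MeasurePreserving f μ ν) {g : β → G}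
    (hg : StronglyMeasurable g) : ∫ x, g (f x) ∂μ = ∫ y, g y ∂ν :=
  hf.map_eq ▸ (integral_map_of_stronglyMeasurable hf.measurable hg).symm

theorem ae_eq_of_forall_integral_mul_eq {α 𝕜 : Type*} [MeasurableSpace α] [RCLike 𝕜]
    {μ : Measure α} [SigmaFinite μ] {F G : α → 𝕜} (hF : Integrable F μ) (hG : Integrable G μ)
    (h : ∀ φ : α → 𝕜, Measurable φ → MemLp φ ∞ μ → ∫ x, φ x * F x ∂μ = ∫ x, φ x * G x ∂μ) :
    F =ᵐ[μ] G := by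
  refine ae_eq_of_forall_setIntegral_eq_of_sigmaFinite (fun s _ _ => hF.integrableOn)
    (fun s _ _ => hG.integrableOn) fun s hs _ => ?_
  have indicator_one_mul (H : α → 𝕜) : (fun x => s.indicator 1 x * H x) = s.indicator H :=
    funext fun x => by by_cases hx : x ∈ s <;> simp [hx]
  have := h (s.indicator 1) (measurable_one.indicator hs) ((memLp_top_const 1).indicator hs)
  rwa [indicator_one_mul, indicator_one_mul, integral_indicator hs, integral_indicator hs] at this

variable {X : Type*} {m mX : MeasurableSpace X} {μ : Measure X}

theorem integral_mul_of_condExp_ae_eq_const {𝕜 : Type*} [RCLike 𝕜] (hm : m ≤ mX)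
    [SigmaFinite (μ.trim hm)] {g h : X → 𝕜} {c : 𝕜} (hg : StronglyMeasurable[m] g)
    (hgh : Integrable (fun x => g x * h x) μ) (hh : Integrable h μ)
    (hc : μ[h|m] =ᵐ[μ] fun _ => c) :
    ∫ x, g x * h x ∂μ = (∫ x, g x ∂μ) * c :=
  calc ∫ x, g x * h x ∂μ = ∫ x, μ[fun x => g x * h x|m] x ∂μ := (integral_condExp hm).symm
    _ = ∫ x, g x * c ∂μ := integral_congr_ae <|
        (condExp_bilin_of_stronglyMeasurable_left (.mul ℝ 𝕜) hg hgh hh).trans <|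
          hc.mono fun x hx => by simp [hx]
    _ = (∫ x, g x ∂μ) * c := integral_mul_const c g

theorem MemLp.integrable_mul_mul_conj {g u v : X → ℂ} (hg : MemLp g ∞ μ) (hu : MemLp u 2 μ)
    (hv : MemLp v 2 μ) : Integrable (fun x => g x * (u x * conj (v x))) μ :=
  (hu.integrable_mul hv.star).mul_of_top_right hg

end MeasureTheory

namespace POrthonormal

variable {X L : Type*} [MeasurableSpace X] [MeasurableSpace L] {μ : Measure X} [IsFiniteMeasure μ]
  {ν : Measure L} {T : X ≃ᵐ X} {ψ : L ≃ᵐ L} {p : X → L} {n : ℕ} {e : Fin n → X → ℂ}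

theorem integral_comp_mul_mul_conj (he_orth : POrthonormal μ p e) (hp : Measurable p)
    (he : ∀ i, MemLp (e i) 2 μ) {φ : L → ℂ} (hφ : Measurable φ) (hφp : MemLp (φ ∘ p) ∞ μ)
    (i j : Fin n) :
    ∫ x, φ (p x) * (e i x * conj (e j x)) ∂μ =
      (∫ x, φ (p x) ∂μ) * if i = j then 1 else 0 :=
  integral_mul_of_condExp_ae_eq_const hp.comap_le
    (hφ.comp (comap_measurable p)).stronglyMeasurable
    (hφp.integrable_mul_mul_conj (he i) (he j)) ((he i).integrable_mul (he j).star) (he_orth i j)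

theorem integral_sum_mul_conj_sum (he_orth : POrthonormal μ p e) (hp : Measurable p)
    (he : ∀ i, MemLp (e i) 2 μ) {a b : Fin n → L → ℂ}
    (ha : ∀ k, Measurable (a k)) (hap : ∀ k, MemLp (a k ∘ p) ∞ μ)
    (hb : ∀ k, Measurable (b k)) (hbp : ∀ k, MemLp (b k ∘ p) ∞ μ) :
    ∫ x, (∑ k, a k (p x) * e k x) * conj (∑ k, b k (p x) * e k x) ∂μ =
      ∫ x, ∑ k, a k (p x) * conj (b k (p x)) ∂μ := by
  set c : Fin n → Fin n → L → ℂ := fun k k' l => a k l * conj (b k' l)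
  have hc : ∀ k k', Measurable (c k k') := fun k k' => by fun_prop
  have hcp : ∀ k k', MemLp (c k k' ∘ p) ∞ μ := fun k k' => (hbp k').star.mul (hap k)
  have hint : ∀ k k', Integrable (fun x => c k k' (p x) * (e k x * conj (e k' x))) μ :=
    fun k k' => (hcp k k').integrable_mul_mul_conj (he k) (he k')
  calc ∫ x, (∑ k, a k (p x) * e k x) * conj (∑ k, b k (p x) * e k x) ∂μ
      = ∫ x, ∑ k, ∑ k', c k k' (p x) * (e k x * conj (e k' x)) ∂μ := by
        congr 1 with x
        simp only [c, map_sum, map_mul, Finset.sum_mul_sum]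
        exact Finset.sum_congr rfl fun k _ => Finset.sum_congr rfl fun k' _ => by ring
    _ = ∑ k, ∑ k', (∫ x, c k k' (p x) ∂μ) * if k = k' then 1 else 0 := by
        rw [integral_finsetSum _ fun k _ => integrable_finsetSum _ fun k' _ => hint k k']
        refine Finset.sum_congr rfl fun k _ => ?_
        rw [integral_finsetSum _ fun k' _ => hint k k']
        exact Finset.sum_congr rfl fun k' _ =>
          he_orth.integral_comp_mul_mul_conj hp he (hc k k') (hcp k k') k k'
    _ = ∫ x, ∑ k, a k (p x) * conj (b k (p x)) ∂μ := by
        simp only [mul_ite, mul_one, mul_zero, Finset.sum_ite_eq, Finset.mem_univ, if_true]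
        exact (integral_finsetSum _ fun k _ => (hcp k k).integrable le_top).symm

theorem integral_comp_mul_mul_conj_comp_of_semiconj (he_orth : POrthonormal μ p e)
    (he : ∀ i, MemLp (e i) 2 μ) (hT : MeasurePreserving T μ μ) (hψ : MeasurePreserving ψ ν ν)
    (hp : MeasurePreserving p μ ν) (hpT : (fun x => p (T x)) =ᵐ[μ] fun x => ψ (p x))
    {φ : L → ℂ} (hφ : Measurable φ) (hφν : MemLp φ ∞ ν) (i j : Fin n) :
    ∫ x, φ (p x) * (e i (T x) * conj (e j (T x))) ∂μ =
      (∫ l, φ l ∂ν) * if i = j then 1 else 0 := by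
  set F : X → ℂ := fun x => φ (ψ.symm (p x)) * (e i x * conj (e j x))
  have hφψ : Measurable (φ ∘ ψ.symm) := hφ.comp ψ.symm.measurable
  calc ∫ x, φ (p x) * (e i (T x) * conj (e j (T x))) ∂μ
      = ∫ x, F (T x) ∂μ := integral_congr_ae <| hpT.mono fun x hx => by simp [F, hx]
    _ = ∫ x, F x ∂μ := hT.integral_comp' F
    _ = (∫ x, φ (ψ.symm (p x)) ∂μ) * if i = j then 1 else 0 :=
        he_orth.integral_comp_mul_mul_conj hp.measurable he hφψ
          ((hφν.comp_measurePreserving (hψ.symm ψ)).comp_measurePreserving hp) i j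
    _ = (∫ l, φ (ψ.symm l) ∂ν) * if i = j then 1 else 0 :=
        congrArg (· * _) (hp.integral_comp_of_stronglyMeasurable hφψ.stronglyMeasurable)
    _ = (∫ l, φ l ∂ν) * if i = j then 1 else 0 := by rw [(hψ.symm ψ).integral_comp' φ]

theorem integral_mul_sum_mul_conj_of_cocycle (he_orth : POrthonormal μ p e)
    (he : ∀ i, MemLp (e i) 2 μ) (hT : MeasurePreserving T μ μ) (hψ : MeasurePreserving ψ ν ν)
    (hp : MeasurePreserving p μ ν) (hpT : (fun x => p (T x)) =ᵐ[μ] fun x => ψ (p x))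
    {f : Fin n → Fin n → L → ℂ} (hf : ∀ i j, Measurable (f i j)) (hfν : ∀ i j, MemLp (f i j) ∞ ν)
    (he_inv : ∀ i, (fun x => e i (T x)) =ᵐ[μ] fun x => ∑ j, f i j (p x) * e j x)
    {φ : L → ℂ} (hφ : Measurable φ) (hφν : MemLp φ ∞ ν) (i j : Fin n) :
    ∫ l, φ l * ∑ k, f i k l * conj (f j k l) ∂ν = (∫ l, φ l ∂ν) * if i = j then 1 else 0 :=
  calc ∫ l, φ l * ∑ k, f i k l * conj (f j k l) ∂ν
      = ∫ x, φ (p x) * ∑ k, f i k (p x) * conj (f j k (p x)) ∂μ :=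
        (hp.integral_comp_of_stronglyMeasurable (Measurable.stronglyMeasurable (by fun_prop))).symm
    _ = ∫ x, ∑ k, φ (p x) * f i k (p x) * conj (f j k (p x)) ∂μ := by
        simp only [Finset.mul_sum, mul_assoc]
    _ = ∫ x, (∑ k, φ (p x) * f i k (p x) * e k x) * conj (∑ k, f j k (p x) * e k x) ∂μ :=
        (he_orth.integral_sum_mul_conj_sum hp.measurable he (a := fun k l => φ l * f i k l)
          (fun k => by fun_prop) (fun k => ((hfν i k).mul hφν).comp_measurePreserving hp)
          (hf j) (fun k => (hfν j k).comp_measurePreserving hp)).symm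
    _ = ∫ x, φ (p x) * (e i (T x) * conj (e j (T x))) ∂μ := by
        refine integral_congr_ae ?_
        filter_upwards [he_inv i, he_inv j] with x hi hj
        simp only [hi, hj, Finset.mul_sum, Finset.sum_mul, mul_assoc]
    _ = (∫ l, φ l ∂ν) * if i = j then 1 else 0 :=
        he_orth.integral_comp_mul_mul_conj_comp_of_semiconj he hT hψ hp hpT hφ hφν i j

end POrthonormal

theorem cocycle_matrix_ae_unitary_general
    {X : Type*} [MeasurableSpace X] (μ : Measure X) [IsProbabilityMeasure μ]
    (T : X ≃ X) (hT_meas : Measurable T) (hT_inv_meas : Measurable T.symm)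
    (hT : Measure.map T μ = μ)
    {L : Type*} [TopologicalSpace L]
    [MeasurableSpace L] [BorelSpace L]
    (ψ : L ≃ₜ L) (ν : Measure L) [IsProbabilityMeasure ν]
    (hν_inv : Measure.map ψ ν = ν)
    (p : X → L) (hp_meas : Measurable p) (hp_push : Measure.map p μ = ν)
    (hp_comm : (fun x => p (T x)) =ᵐ[μ] fun x => ψ (p x))
    {n : ℕ} (e : Fin n → X → ℂ)
    (he_meas : ∀ i, Measurable (e i))
    (he_bdd : ∀ i, ∃ C : ℝ, ∀ᵐ x ∂μ, ‖e i x‖ ≤ C)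
    (he_orth : POrthonormal μ p e)
    (f : Fin n → Fin n → L → ℂ)
    (hf_meas : ∀ i j, Measurable (f i j))
    (hf_bdd : ∀ i j, ∃ C : ℝ, ∀ l, ‖f i j l‖ ≤ C)
    (he_inv : ∀ i, (fun x => e i (T x)) =ᵐ[μ] fun x => ∑ j, f i j (p x) * e j x) :
    ∀ᵐ l ∂ν, (Matrix.of fun i j => f i j l) ∈ Matrix.unitaryGroup (Fin n) ℂ ∧
      ∀ i j : Fin n, (∑ k, f i k l * (starRingEnd ℂ) (f j k l)) =
        if i = j then (1 : ℂ) else 0 := by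
  have hT_mp : MeasurePreserving (⟨T, hT_meas, hT_inv_meas⟩ : X ≃ᵐ X) μ μ := ⟨hT_meas, hT⟩
  have hψ_mp : MeasurePreserving ψ.toMeasurableEquiv ν ν := ⟨ψ.measurable, hν_inv⟩
  have hp_mp : MeasurePreserving p μ ν := ⟨hp_meas, hp_push⟩
  have he : ∀ i, MemLp (e i) 2 μ := fun i =>
    (he_bdd i).elim fun C hC => .of_bound (he_meas i).aestronglyMeasurable C hC
  have hf : ∀ i j, MemLp (f i j) ∞ ν := fun i j =>
    (hf_bdd i j).elim fun C hC => .of_bound (hf_meas i j).aestronglyMeasurable C (ae_of_all _ hC)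
  have hunitary : ∀ i j, (fun l => ∑ k, f i k l * conj (f j k l)) =ᵐ[ν]
      fun _ => if i = j then 1 else 0 := fun i j =>
    ae_eq_of_forall_integral_mul_eq
      (integrable_finsetSum _ fun k _ => ((hf j k).star.mul (hf i k)).integrable le_top)
      (integrable_const _) fun φ hφ hφν => by
        rw [he_orth.integral_mul_sum_mul_conj_of_cocycle he hT_mp hψ_mp hp_mp hp_comm hf_meas hf
          he_inv hφ hφν, integral_mul_const]
  filter_upwards [ae_all_iff.2 fun i => ae_all_iff.2 (hunitary i)] with l hl
  refine ⟨Matrix.mem_unitaryGroup_iff.2 ?_, hl⟩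
  ext i j
  simpa [Matrix.mul_apply, Matrix.one_apply] using hl i j

/-- The matrix of coefficients of the Koopman operator with respect to a
`p`-orthonormal family is unitary almost everywhere. -/
theorem cocycle_matrix_ae_unitary
    {X : Type*} [MeasurableSpace X] (μ : Measure X) [IsProbabilityMeasure μ]
    (T : X ≃ X) (hT_meas : Measurable T) (hT_inv_meas : Measurable T.symm)
    (hT : Measure.map T μ = μ) (hT' : Measure.map T.symm μ = μ)
    {L : Type*} [TopologicalSpace L] [CompactSpace L] [T2Space L] [Nonempty L]
    [MeasurableSpace L] [BorelSpace L]
    (ψ : L ≃ₜ L) (ν : Measure L) [IsProbabilityMeasure ν]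
    (hν_inv : Measure.map ψ ν = ν)
    (p : X → L) (hp_meas : Measurable p) (hp_push : Measure.map p μ = ν)
    (hp_comm : (fun x => p (T x)) =ᵐ[μ] fun x => ψ (p x))
    {n : ℕ} (e : Fin n → X → ℂ)
    (he_meas : ∀ i, Measurable (e i))
    (he_bdd : ∀ i, ∃ C : ℝ, ∀ᵐ x ∂μ, ‖e i x‖ ≤ C)
    (he_orth : POrthonormal μ p e)
    (f : Fin n → Fin n → L → ℂ)
    (hf_meas : ∀ i j, Measurable (f i j))
    (hf_bdd : ∀ i j, ∃ C : ℝ, ∀ l, ‖f i j l‖ ≤ C)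
    (he_inv : ∀ i, (fun x => e i (T x)) =ᵐ[μ] fun x => ∑ j, f i j (p x) * e j x) :
    ∀ᵐ l ∂ν, (Matrix.of fun i j => f i j l) ∈ Matrix.unitaryGroup (Fin n) ℂ ∧
      ∀ i j : Fin n, (∑ k, f i k l * (starRingEnd ℂ) (f j k l)) =
        if i = j then (1 : ℂ) else 0 :=
  cocycle_matrix_ae_unitary_general μ T hT_meas hT_inv_meas hT ψ ν hν_inv p hp_meas hp_push hp_comm
    e he_meas he_bdd he_orth f hf_meas hf_bdd he_inv
end

section
/- Let (X, 𝒜, μ) be a probability space, L a compact Hausdorff space, and p : X → L a measurable map; let m ⊆ 𝒜 be the σ-algebra {p⁻¹(B) : B Borel in L}. Let e_1, …, e_n be p-orthonormal essentially bounded measurable functions X → ℂ, and let f : X → ℂ be essentially bounded measurable with f = Σ_j (g_j ∘ p) · e_j μ-almost everywhere for some bounded Borel measurable g_1, …, g_n : L → ℂ. Then for each j one has g_j ∘ p = μ[f · conj(e_j) | m] μ-almost everywhere; in particular the coefficient functions g_j ∘ p are uniquely determined μ-almost everywhere by f. -/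
open MeasureTheory

/-- Conditional expectation commutes with continuous linear maps. -/
lemma condexp_comp_clm {α E F : Type*} {m m0 : MeasurableSpace α} (hm : m ≤ m0)
    {μ : Measure α} [SigmaFinite (μ.trim hm)]
    [NormedAddCommGroup E] [NormedSpace ℝ E] [CompleteSpace E]
    [NormedAddCommGroup F] [NormedSpace ℝ F] [CompleteSpace F]
    (T : E →L[ℝ] F) {f : α → E} (hf : Integrable f μ) :
    μ[fun x => T (f x)|m] =ᵐ[μ] fun x => T ((μ[f|m]) x) := by
  symm
  refine ae_eq_condExp_of_forall_setIntegral_eq hm (T.integrable_comp hf)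
    (fun s _ _ => (T.integrable_comp integrable_condExp).integrableOn)
    (fun s hs hμs => ?_) ?_
  · rw [T.integral_comp_comm integrable_condExp.integrableOn,
      T.integral_comp_comm hf.integrableOn, setIntegral_condExp hm hf hs]
  · exact (T.continuous.comp_stronglyMeasurable stronglyMeasurable_condExp).aestronglyMeasurable

/-- Pull-out property of the conditional expectation for complex-valued functions. -/
lemma condexp_mul_complex {α : Type*} {m m0 : MeasurableSpace α} (hm : m ≤ m0)
    {μ : Measure α} [IsFiniteMeasure μ] {f g : α → ℂ}
    (hf : StronglyMeasurable[m] f) (c : ℝ) (hf_bound : ∀ x, ‖f x‖ ≤ c)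
    (hg : Integrable g μ) :
    μ[f * g|m] =ᵐ[μ] f * μ[g|m] := by
  haveI : SigmaFinite (μ.trim hm) := by infer_instance
  set f₁ : α → ℝ := fun x => (f x).re with hf₁
  set f₂ : α → ℝ := fun x => (f x).im with hf₂
  set g₁ : α → ℝ := fun x => (g x).re with hg₁
  set g₂ : α → ℝ := fun x => (g x).im with hg₂
  have hf₁m : StronglyMeasurable[m] f₁ :=
    Complex.continuous_re.comp_stronglyMeasurable hf
  have hf₂m : StronglyMeasurable[m] f₂ :=
    Complex.continuous_im.comp_stronglyMeasurable hf
  have hg₁i : Integrable g₁ μ := hg.re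
  have hg₂i : Integrable g₂ μ := hg.im
  have hf₁b : ∀ᵐ x ∂μ, ‖f₁ x‖ ≤ c :=
    Filter.Eventually.of_forall fun x => (Complex.abs_re_le_norm (f x)).trans (hf_bound x)
  have hf₂b : ∀ᵐ x ∂μ, ‖f₂ x‖ ≤ c :=
    Filter.Eventually.of_forall fun x => (Complex.abs_im_le_norm (f x)).trans (hf_bound x)
  -- real pull-outs
  have h11 := condExp_stronglyMeasurable_mul_of_bound hm hf₁m hg₁i c hf₁b
  have h12 := condExp_stronglyMeasurable_mul_of_bound hm hf₁m hg₂i c hf₁b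
  have h21 := condExp_stronglyMeasurable_mul_of_bound hm hf₂m hg₁i c hf₂b
  have h22 := condExp_stronglyMeasurable_mul_of_bound hm hf₂m hg₂i c hf₂b
  -- complexified condexps of real parts
  have hre := condexp_comp_clm hm Complex.ofRealCLM hg₁i
  have him := condexp_comp_clm hm Complex.ofRealCLM hg₂i
  -- decomposition of g
  have hg_decomp : g = (fun x => (Complex.ofRealCLM (g₁ x)))
      + Complex.I • (fun x => (Complex.ofRealCLM (g₂ x))) := by
    funext x
    simp only [Pi.add_apply, Pi.smul_apply, smul_eq_mul, Complex.ofRealCLM_apply]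
    rw [mul_comm]
    exact (Complex.re_add_im (g x)).symm
  have hcg : μ[g|m] =ᵐ[μ] (fun x => (Complex.ofRealCLM ((μ[g₁|m]) x)))
      + Complex.I • (fun x => (Complex.ofRealCLM ((μ[g₂|m]) x))) := by
    calc μ[g|m] =ᵐ[μ] μ[(fun x => (Complex.ofRealCLM (g₁ x)))
        + Complex.I • (fun x => (Complex.ofRealCLM (g₂ x)))|m] := by rw [← hg_decomp]
      _ =ᵐ[μ] μ[(fun x => (Complex.ofRealCLM (g₁ x)))|m]
          + μ[Complex.I • (fun x => (Complex.ofRealCLM (g₂ x)))|m] :=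
        condExp_add (Complex.ofRealCLM.integrable_comp hg₁i)
          ((Complex.ofRealCLM.integrable_comp hg₂i).smul Complex.I) m
      _ =ᵐ[μ] (fun x => (Complex.ofRealCLM ((μ[g₁|m]) x)))
          + Complex.I • (fun x => (Complex.ofRealCLM ((μ[g₂|m]) x))) := by
        refine hre.add ?_
        refine (condExp_smul Complex.I _ _).trans ?_
        exact (condexp_comp_clm hm Complex.ofRealCLM hg₂i).const_smul Complex.I
  -- decomposition of f * g
  have hfg_decomp : f * g = (fun x => (Complex.ofRealCLM ((f₁ * g₁) x)))
      - (fun x => (Complex.ofRealCLM ((f₂ * g₂) x)))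
      + Complex.I • ((fun x => (Complex.ofRealCLM ((f₁ * g₂) x)))
        + (fun x => (Complex.ofRealCLM ((f₂ * g₁) x)))) := by
    funext x
    simp only [Pi.mul_apply, Pi.add_apply, Pi.sub_apply, Pi.smul_apply, smul_eq_mul,
      Complex.ofRealCLM_apply, hf₁, hf₂, hg₁, hg₂]
    rw [Complex.ext_iff]
    constructor <;> simp [Complex.mul_re, Complex.mul_im] <;> ring
  have hb₁ : ∀ (a b : α → ℝ) (ha : StronglyMeasurable[m] a) (hab : ∀ᵐ x ∂μ, ‖a x‖ ≤ c)
      (hbi : Integrable b μ), Integrable (a * b) μ := fun a b ha hab hbi =>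
    hbi.bdd_mul (ha.mono hm).aestronglyMeasurable hab
  have i11 := hb₁ f₁ g₁ hf₁m hf₁b hg₁i
  have i12 := hb₁ f₁ g₂ hf₁m hf₁b hg₂i
  have i21 := hb₁ f₂ g₁ hf₂m hf₂b hg₁i
  have i22 := hb₁ f₂ g₂ hf₂m hf₂b hg₂i
  have c11 := (condexp_comp_clm hm Complex.ofRealCLM i11)
  have c12 := (condexp_comp_clm hm Complex.ofRealCLM i12)
  have c21 := (condexp_comp_clm hm Complex.ofRealCLM i21)
  have c22 := (condexp_comp_clm hm Complex.ofRealCLM i22)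
  have hcfg : μ[f * g|m] =ᵐ[μ]
      (fun x => (Complex.ofRealCLM ((μ[f₁ * g₁|m]) x)))
      - (fun x => (Complex.ofRealCLM ((μ[f₂ * g₂|m]) x)))
      + Complex.I • ((fun x => (Complex.ofRealCLM ((μ[f₁ * g₂|m]) x)))
        + (fun x => (Complex.ofRealCLM ((μ[f₂ * g₁|m]) x)))) := by
    rw [hfg_decomp]
    have e1 : μ[(fun x => (Complex.ofRealCLM ((f₁ * g₁) x)))
        - (fun x => (Complex.ofRealCLM ((f₂ * g₂) x)))
        + Complex.I • ((fun x => (Complex.ofRealCLM ((f₁ * g₂) x)))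
          + (fun x => (Complex.ofRealCLM ((f₂ * g₁) x))))|m] =ᵐ[μ]
        μ[(fun x => (Complex.ofRealCLM ((f₁ * g₁) x)))
          - (fun x => (Complex.ofRealCLM ((f₂ * g₂) x)))|m]
        + μ[Complex.I • ((fun x => (Complex.ofRealCLM ((f₁ * g₂) x)))
          + (fun x => (Complex.ofRealCLM ((f₂ * g₁) x))))|m] :=
      condExp_add ((Complex.ofRealCLM.integrable_comp i11).sub
        (Complex.ofRealCLM.integrable_comp i22))
        (((Complex.ofRealCLM.integrable_comp i12).add
          (Complex.ofRealCLM.integrable_comp i21)).smul Complex.I) m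
    refine e1.trans ?_
    have e2 := condExp_sub (μ := μ) (m := m) (Complex.ofRealCLM.integrable_comp i11)
      (Complex.ofRealCLM.integrable_comp i22)
    have e3 := (condExp_smul (μ := μ) (m := m) Complex.I
      ((fun x => (Complex.ofRealCLM ((f₁ * g₂) x)))
        + (fun x => (Complex.ofRealCLM ((f₂ * g₁) x)))))
    have e4 := condExp_add (μ := μ) (m := m) (Complex.ofRealCLM.integrable_comp i12)
      (Complex.ofRealCLM.integrable_comp i21)
    filter_upwards [e2, e3, e4, c11, c12, c21, c22] with x he2 he3 he4 hc11 hc12 hc21 hc22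
    simp only [Pi.add_apply, Pi.sub_apply, Pi.smul_apply, smul_eq_mul] at *
    rw [he2, he3, he4, hc11, hc12, hc21, hc22]
  -- combine
  filter_upwards [hcfg, hcg, h11, h12, h21, h22] with x hx hgx h11x h12x h21x h22x
  simp only [Pi.add_apply, Pi.sub_apply, Pi.smul_apply, Pi.mul_apply, smul_eq_mul,
    Complex.ofRealCLM_apply] at *
  rw [hx, hgx, h11x, h12x, h21x, h22x]
  rw [Complex.ext_iff]
  constructor <;> simp [Complex.mul_re, Complex.mul_im, Complex.add_re, Complex.add_im] <;> ring

/-- The coefficients of an element of a module with `p`-orthonormal basis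
`e_1, …, e_n` are given by conditional expectations: if `f = Σ_j (g_j ∘ p) · e_j` a.e.,
then `g_j ∘ p = μ[f · conj (e_j) | m]` a.e.; in particular they are determined a.e. by `f`. -/
theorem coefficients_eq_condexp
    {X : Type*} [MeasurableSpace X] (μ : Measure X) [IsProbabilityMeasure μ]
    {L : Type*} [TopologicalSpace L] [CompactSpace L] [T2Space L] [Nonempty L]
    [MeasurableSpace L] [BorelSpace L]
    (p : X → L) (hp_meas : Measurable p)
    {n : ℕ} (e : Fin n → X → ℂ)
    (he_meas : ∀ i, Measurable (e i))
    (he_bdd : ∀ i, ∃ C : ℝ, ∀ᵐ x ∂μ, ‖e i x‖ ≤ C)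
    (he_orth : POrthonormal μ p e)
    (f : X → ℂ) (hf_meas : Measurable f) (hf_bdd : ∃ C : ℝ, ∀ᵐ x ∂μ, ‖f x‖ ≤ C)
    (g : Fin n → L → ℂ)
    (hg_meas : ∀ j, Measurable (g j))
    (hg_bdd : ∀ j, ∃ C : ℝ, ∀ l, ‖g j l‖ ≤ C)
    (hf_rep : f =ᵐ[μ] fun x => ∑ j, g j (p x) * e j x) :
    ∀ j : Fin n,
      (fun x => g j (p x))
        =ᵐ[μ] μ[(fun x => f x * (starRingEnd ℂ) (e j x)) | fiberSigmaAlgebra p] := by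
  intro j
  set m : MeasurableSpace X := fiberSigmaAlgebra p with hm_def
  have hm : m ≤ _ := hp_meas.comap_le
  have hp_m : Measurable[m] p := fun s hs => ⟨s, hs, rfl⟩
  -- m-strong measurability of g i ∘ p
  have hgp_sm : ∀ i, StronglyMeasurable[m] (fun x => g i (p x)) := fun i =>
    (Measurable.stronglyMeasurable (((hg_meas i).comp hp_m)))
  -- integrability of e i * conj (e j)
  have hee_int : ∀ i, Integrable (fun x => e i x * (starRingEnd ℂ) (e j x)) μ := by
    intro i
    obtain ⟨Ci, hCi⟩ := he_bdd i
    obtain ⟨Cj, hCj⟩ := he_bdd j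
    refine MemLp.integrable le_rfl (MemLp.of_bound
      (((he_meas i).mul (Complex.continuous_conj.measurable.comp (he_meas j))).aestronglyMeasurable) (Ci * Cj) ?_)
    filter_upwards [hCi, hCj] with x hxi hxj
    rw [norm_mul, RCLike.norm_conj]
    have h0 : 0 ≤ Ci := le_trans (norm_nonneg _) hxi
    exact mul_le_mul hxi hxj (norm_nonneg _) h0
  -- rewrite f * conj e_j
  have hrep : (fun x => f x * (starRingEnd ℂ) (e j x))
      =ᵐ[μ] fun x => ∑ i, (fun y => g i (p y)) x * (e i x * (starRingEnd ℂ) (e j x)) := by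
    filter_upwards [hf_rep] with x hx
    rw [hx]
    rw [Finset.sum_mul]
    exact Finset.sum_congr rfl fun i _ => by ring
  have step1 : μ[(fun x => f x * (starRingEnd ℂ) (e j x))|m]
      =ᵐ[μ] μ[(fun x => ∑ i, g i (p x) * (e i x * (starRingEnd ℂ) (e j x)))|m] :=
    condExp_congr_ae hrep
  -- integrability of each summand
  have hsummand_int : ∀ i, Integrable (fun x => g i (p x) * (e i x * (starRingEnd ℂ) (e j x))) μ := by
    intro i
    obtain ⟨Ci, hCi⟩ := hg_bdd i
    exact (hee_int i).bdd_mul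
      (μ := μ) ((hgp_sm i).mono hm).aestronglyMeasurable
      (Filter.Eventually.of_forall fun x => hCi (p x))
  have step2 : μ[(fun x => ∑ i, g i (p x) * (e i x * (starRingEnd ℂ) (e j x)))|m]
      =ᵐ[μ] ∑ i, μ[(fun x => g i (p x) * (e i x * (starRingEnd ℂ) (e j x)))|m] := by
    have := condExp_finsetSum (μ := μ) (m := m) (s := Finset.univ)
      (f := fun i x => g i (p x) * (e i x * (starRingEnd ℂ) (e j x)))
      (fun i _ => hsummand_int i)
    refine Filter.EventuallyEq.trans ?_ this
    apply condExp_congr_ae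
    filter_upwards with x
    simp
  -- pull-out each term
  have step3 : ∀ i, μ[(fun x => g i (p x) * (e i x * (starRingEnd ℂ) (e j x)))|m]
      =ᵐ[μ] fun x => g i (p x) * (if i = j then (1 : ℂ) else 0) := by
    intro i
    obtain ⟨Ci, hCi⟩ := hg_bdd i
    have hpull := condexp_mul_complex (μ := μ) hm (f := fun x => g i (p x))
      (g := fun x => e i x * (starRingEnd ℂ) (e j x)) (hgp_sm i) Ci
      (fun x => hCi (p x)) (hee_int i)
    have : (fun x => g i (p x)) * (fun x => e i x * (starRingEnd ℂ) (e j x))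
        = fun x => g i (p x) * (e i x * (starRingEnd ℂ) (e j x)) := rfl
    rw [this] at hpull
    refine hpull.trans ?_
    have horth := he_orth i j
    filter_upwards [horth] with x hx
    simp only [Pi.mul_apply]
    rw [hx]
  -- combine
  symm
  refine step1.trans (step2.trans ?_)
  have : ∀ᵐ x ∂μ, ∀ i, (μ[(fun y => g i (p y) * (e i y * (starRingEnd ℂ) (e j y)))|m]) x
      = g i (p x) * (if i = j then (1 : ℂ) else 0) := by
    rw [ae_all_iff]
    exact fun i => step3 i
  filter_upwards [this] with x hx
  simp only [Finset.sum_apply]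
  rw [Finset.sum_congr rfl fun i _ => hx i]
  simp [Finset.sum_ite_eq', Finset.mem_univ]
end

section
/- Let (K;φ) be a distal topological dynamical system. If there exists a φ-invariant Borel probability measure μ on K that is ergodic for φ and fully supported, then (K;φ) is minimal. -/
/-!
In a distal system every element of the enveloping semigroup `E ⊆ K^K` of `φ` is injective, so
the idempotent that the compact semigroup `E ∘ g` contains (Ellis–Numakura) is the identity and
`g` has a left inverse in `E`. Hence orbit closures are symmetric: `y ∈ cl O(x)` implies
`x ∈ cl O(y)`. Ergodicity and full support make almost every orbit visit every nonempty open
set, countably many at a time.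

If `M` is a proper closed invariant set and `f` is an Urysohn function vanishing on `M` with
`f p = 1`, then `Z = {x | ∀ n, f (φⁿ x) = 0}` is closed, invariant, contains `M` and misses `p`.
Unlike `M`, it is the fibre over `0` of a continuous map `x ↦ (f (φⁿ x))ₙ` into the first
countable space `ℝ^ℤ`. A point whose orbit leaves `Z` and enters the preimages of countably many
basic neighbourhoods of `0` has a point of `Z` in its orbit closure, hence lies in `Z` by
symmetry: a contradiction.
-/

open MeasureTheory

open Filter Set Topology

namespace Homeomorph

variable {K : Type*} [TopologicalSpace K]

theorem _root_.homeoZPow_eq_zpow (φ : K ≃ₜ K) (n : ℤ) : homeoZPow φ n = ⇑(φ ^ n) :=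
  let toPerm : (K ≃ₜ K) →* Equiv.Perm K :=
    { toFun := Homeomorph.toEquiv, map_one' := rfl, map_mul' := fun _ _ => rfl }
  congrArg DFunLike.coe (map_zpow toPerm φ n).symm

theorem image_zpow_eq_self {φ : K ≃ₜ K} {M : Set K} (hM : φ '' M = M) (n : ℤ) :
    ⇑(φ ^ n) '' M = M := by
  have hM_inv : ⇑φ⁻¹ '' M = M := by
    nth_rewrite 1 [← hM]
    exact φ.toEquiv.symm_image_image M
  induction n using Int.induction_on with
  | zero => exact image_id M
  | succ n ih =>
    rw [zpow_add_one, show ⇑(φ ^ (n : ℤ) * φ) = ⇑(φ ^ (n : ℤ)) ∘ φ from rfl, image_comp, hM, ih]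
  | pred n ih =>
    rw [zpow_sub_one, show ⇑(φ ^ (-n : ℤ) * φ⁻¹) = ⇑(φ ^ (-n : ℤ)) ∘ ⇑φ⁻¹ from rfl, image_comp,
      hM_inv, ih]

variable (φ : K ≃ₜ K)

def IsDistal : Prop :=
  ∀ x y : K, (∃ z : K, (z, z) ∈ closure {w : K × K | ∃ n : ℤ, w = ((φ ^ n) x, (φ ^ n) y)}) →
    x = y

def envelopingSemigroup : Set (K → K) := closure (range fun n : ℤ => ⇑(φ ^ n))

variable {φ}

theorem id_mem_envelopingSemigroup : id ∈ φ.envelopingSemigroup :=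
  subset_closure ⟨0, rfl⟩

theorem comp_mem_envelopingSemigroup {g h : K → K} (hg : g ∈ φ.envelopingSemigroup)
    (hh : h ∈ φ.envelopingSemigroup) : g ∘ h ∈ φ.envelopingSemigroup := by
  -- `k ↦ g ∘ k` is continuous only for continuous `g`, hence two closure steps.
  have hpow_comp (n : ℤ) : ⇑(φ ^ n) ∘ h ∈ φ.envelopingSemigroup := by
    refine map_mem_closure (continuous_pi fun x => (φ ^ n).continuous.comp (continuous_apply x))
      hh ?_
    rintro _ ⟨m, rfl⟩
    exact ⟨n + m, by simp only [zpow_add]; rfl⟩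
  refine MapsTo.closure_left (f := (· ∘ h)) (t := φ.envelopingSemigroup) ?_
    (continuous_pi fun x => continuous_apply (h x)) isClosed_closure hg
  rintro _ ⟨n, rfl⟩
  exact hpow_comp n

theorem IsDistal.injective_of_mem_envelopingSemigroup (hφ : φ.IsDistal) {g : K → K}
    (hg : g ∈ φ.envelopingSemigroup) : Function.Injective g := by
  intro x y hxy
  refine hφ x y ⟨g x, ?_⟩
  have hpair := map_mem_closure ((continuous_apply x).prodMk (continuous_apply y)) hg
    (t := {w : K × K | ∃ n : ℤ, w = ((φ ^ n) x, (φ ^ n) y)}) (by rintro _ ⟨n, rfl⟩; exact ⟨n, rfl⟩)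
  rwa [← hxy] at hpair

theorem ae_exists_zpow_mem [MeasurableSpace K] [OpensMeasurableSpace K] {μ : Measure K}
    [IsProbabilityMeasure μ] [μ.IsOpenPosMeasure]
    (hμ_erg : ∀ A : Set K, MeasurableSet A → φ ⁻¹' A = A → μ A = 0 ∨ μ A = 1)
    {V : Set K} (hV : IsOpen V) (hV_ne : V.Nonempty) : ∀ᵐ x ∂μ, ∃ n : ℤ, (φ ^ n) x ∈ V := by
  set W := ⋃ n : ℤ, ⇑(φ ^ n) ⁻¹' V
  have hW_open : IsOpen W := isOpen_iUnion fun n => hV.preimage (φ ^ n).continuous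
  have hW_inv : φ ⁻¹' W = W := by
    ext x
    simp only [W, mem_preimage, mem_iUnion]
    exact (Equiv.addRight 1).exists_congr fun n => by simp [zpow_add_one]
  have hW_ne : μ W ≠ 0 := hW_open.measure_ne_zero μ (hV_ne.mono (subset_iUnion_of_subset 0 le_rfl))
  have hW_one : μ W = 1 := (hμ_erg W hW_open.measurableSet hW_inv).resolve_left hW_ne
  have hW_ae : W ∈ ae μ :=
    mem_ae_iff.mpr ((prob_compl_eq_zero_iff hW_open.measurableSet).mpr hW_one)
  filter_upwards [hW_ae] with x hx
  simpa [W] using hx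

variable [CompactSpace K]

theorem isCompact_envelopingSemigroup : IsCompact φ.envelopingSemigroup :=
  isClosed_closure.isCompact

variable [T2Space K]

theorem IsDistal.exists_comp_eq_id (hφ : φ.IsDistal) {g : K → K}
    (hg : g ∈ φ.envelopingSemigroup) : ∃ g' ∈ φ.envelopingSemigroup, g' ∘ g = id := by
  let : TopologicalSpace (Function.End K) := inferInstanceAs (TopologicalSpace (K → K))
  have : T2Space (Function.End K) := inferInstanceAs (T2Space (K → K))
  obtain ⟨_, ⟨g', hg', rfl⟩, hidem⟩ := exists_idempotent_in_compact_subsemigroup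
    (M := Function.End K) (fun r => continuous_pi fun x => continuous_apply (r x))
    ((· ∘ g) '' φ.envelopingSemigroup) ⟨g, id, id_mem_envelopingSemigroup, rfl⟩
    (isCompact_envelopingSemigroup.image (continuous_pi fun x => continuous_apply (g x)))
    (by
      rintro _ ⟨a, ha, rfl⟩ _ ⟨b, hb, rfl⟩
      exact ⟨a ∘ g ∘ b, comp_mem_envelopingSemigroup ha (comp_mem_envelopingSemigroup hg hb), rfl⟩)
  have hinj := hφ.injective_of_mem_envelopingSemigroup (comp_mem_envelopingSemigroup hg' hg)
  exact ⟨g', hg', funext fun x => hinj (congrFun hidem x)⟩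

theorem exists_mem_envelopingSemigroup_of_mem_closure_orbit {x y : K}
    (hy : y ∈ closure (range fun n : ℤ => (φ ^ n) x)) :
    ∃ g ∈ φ.envelopingSemigroup, g x = y := by
  have hclosed : IsClosed ((fun g : K → K => g x) '' φ.envelopingSemigroup) :=
    (isCompact_envelopingSemigroup.image (continuous_apply x)).isClosed
  refine hclosed.closure_subset_iff.mpr ?_ hy
  rintro _ ⟨n, rfl⟩
  exact ⟨_, subset_closure ⟨n, rfl⟩, rfl⟩

theorem IsDistal.mem_closure_orbit_symm (hφ : φ.IsDistal) {x y : K}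
    (hy : y ∈ closure (range fun n : ℤ => (φ ^ n) x)) :
    x ∈ closure (range fun n : ℤ => (φ ^ n) y) := by
  obtain ⟨g, hg, rfl⟩ := exists_mem_envelopingSemigroup_of_mem_closure_orbit hy
  obtain ⟨g', hg', hg'g⟩ := hφ.exists_comp_eq_id hg
  have hx : g' (g x) = x := congrFun hg'g x
  have hmem := map_mem_closure (continuous_apply (g x)) hg'
    (t := range fun n : ℤ => (φ ^ n) (g x)) (by rintro _ ⟨n, rfl⟩; exact ⟨n, rfl⟩)
  rwa [hx] at hmem

theorem IsDistal.preimage_singleton_eq_empty_or_univ [MeasurableSpace K]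
    [OpensMeasurableSpace K] {μ : Measure K} [IsProbabilityMeasure μ] [μ.IsOpenPosMeasure]
    (hφ : φ.IsDistal)
    (hμ_erg : ∀ A : Set K, MeasurableSet A → φ ⁻¹' A = A → μ A = 0 ∨ μ A = 1)
    {Y : Type*} [TopologicalSpace Y] [T2Space Y] [FirstCountableTopology Y] {F : K → Y}
    (hF : Continuous F) {c : Y} (hF_inv : ∀ n : ℤ, MapsTo (φ ^ n) (F ⁻¹' {c}) (F ⁻¹' {c})) :
    F ⁻¹' {c} = ∅ ∨ F ⁻¹' {c} = univ := by
  by_contra! ⟨⟨x₀, hx₀⟩, hZ_ne⟩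
  obtain ⟨p, hp⟩ := (ne_univ_iff_exists_notMem _).mp hZ_ne
  have hZ_closed : IsClosed (F ⁻¹' {c}) := isClosed_singleton.preimage hF
  obtain ⟨s, hs⟩ := (𝓝 c).exists_antitone_basis
  have hvisit (k : ℕ) : ∀ᵐ x ∂μ, ∃ n : ℤ, (φ ^ n) x ∈ F ⁻¹' interior (s k) :=
    ae_exists_zpow_mem hμ_erg (isOpen_interior.preimage hF)
      ⟨x₀, mem_interior_iff_mem_nhds.mpr (by rw [mem_singleton_iff.mp hx₀]; exact hs.mem k)⟩
  have hleave : ∀ᵐ x ∂μ, ∃ n : ℤ, (φ ^ n) x ∈ (F ⁻¹' {c})ᶜ :=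
    ae_exists_zpow_mem hμ_erg hZ_closed.isOpen_compl ⟨p, hp⟩
  obtain ⟨x, hx_visit, n, hxn⟩ := ((ae_all_iff.mpr hvisit).and hleave).exists
  have hc : c ∈ closure (F '' range fun n : ℤ => (φ ^ n) x) := by
    refine (mem_closure_iff_nhds_basis hs.toHasBasis).mpr fun k _ => ?_
    obtain ⟨n, hn⟩ := hx_visit k
    exact ⟨_, mem_image_of_mem F ⟨n, rfl⟩, interior_subset hn⟩
  rw [hF.isClosedMap.closure_image_eq_of_continuous hF] at hc
  obtain ⟨y, hy, hyc⟩ := hc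
  have hx : x ∈ F ⁻¹' {c} := by
    refine hZ_closed.closure_subset_iff.mpr ?_ (hφ.mem_closure_orbit_symm hy)
    rintro _ ⟨m, rfl⟩
    exact hF_inv m hyc
  exact hxn (hF_inv n hx)

end Homeomorph

theorem distal_with_fully_supported_ergodic_measure_minimal_general
    {K : Type*} [TopologicalSpace K] [CompactSpace K] [T2Space K]
    [MeasurableSpace K] [BorelSpace K]
    (φ : K ≃ₜ K)
    (hdistal : ∀ x y : K,
      (∃ z : K, (z, z) ∈
        closure {w : K × K | ∃ n : ℤ, w = (homeoZPow φ n x, homeoZPow φ n y)}) → x = y)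
    (μ : Measure K) [IsProbabilityMeasure μ]
    (hμ_erg : ∀ A : Set K, MeasurableSet A → φ ⁻¹' A = A → μ A = 0 ∨ μ A = 1)
    (hμ_supp : ∀ U : Set K, IsOpen U → U.Nonempty → 0 < μ U) :
    ∀ M : Set K, IsClosed M → φ '' M = M → M = ∅ ∨ M = Set.univ := by
  intro M hM_closed hM_inv
  have hφ : φ.IsDistal := fun x y hxy => hdistal x y (by simpa only [homeoZPow_eq_zpow] using hxy)
  have : μ.IsOpenPosMeasure := ⟨fun U hU hU_ne => (hμ_supp U hU hU_ne).ne'⟩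
  by_contra! ⟨⟨x₀, hx₀⟩, hM_ne⟩
  obtain ⟨p, hp⟩ := (ne_univ_iff_exists_notMem M).mp hM_ne
  obtain ⟨f, hf_M, hf_p, -⟩ := exists_continuous_zero_one_of_isClosed hM_closed isClosed_singleton
    (disjoint_singleton_right.mpr hp)
  let F : K → ℤ → ℝ := fun x n => f ((φ ^ n) x)
  have hF : Continuous F := continuous_pi fun n => f.continuous.comp (φ ^ n).continuous
  have hF_inv (n : ℤ) : MapsTo (φ ^ n) (F ⁻¹' {0}) (F ⁻¹' {0}) := fun x hx =>
    funext fun m => by simpa [F, zpow_add] using congrFun hx (m + n)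
  have hx₀_mem : x₀ ∈ F ⁻¹' {0} := funext fun n =>
    hf_M (φ.image_zpow_eq_self hM_inv n ▸ mem_image_of_mem _ hx₀)
  have hp_notMem : p ∉ F ⁻¹' {0} := fun h => by simpa [F, hf_p (mem_singleton p)] using congrFun h 0
  rcases hφ.preimage_singleton_eq_empty_or_univ hμ_erg hF hF_inv with h | h
  · exact h.subset hx₀_mem
  · exact hp_notMem (h ▸ mem_univ p)

/-- A distal topological dynamical system carrying a fully supported ergodic
invariant Borel probability measure is minimal. -/
theorem distal_with_fully_supported_ergodic_measure_minimal
    {K : Type*} [TopologicalSpace K] [CompactSpace K] [T2Space K] [Nonempty K]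
    [MeasurableSpace K] [BorelSpace K]
    (φ : K ≃ₜ K)
    (hdistal : ∀ x y : K,
      (∃ z : K, (z, z) ∈
        closure {w : K × K | ∃ n : ℤ, w = (homeoZPow φ n x, homeoZPow φ n y)}) → x = y)
    (μ : Measure K) [IsProbabilityMeasure μ]
    (hμ_inv : Measure.map φ μ = μ)
    (hμ_erg : ∀ A : Set K, MeasurableSet A → φ ⁻¹' A = A → μ A = 0 ∨ μ A = 1)
    (hμ_supp : ∀ U : Set K, IsOpen U → U.Nonempty → 0 < μ U) :
    ∀ M : Set K, IsClosed M → φ '' M = M → M = ∅ ∨ M = Set.univ :=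
  distal_with_fully_supported_ergodic_measure_minimal_general φ hdistal μ hμ_erg hμ_supp
end
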